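/- Let α ≥ 0, d > 0, k > 0, γ > 0, T₀ > 0. Then there exists a unique μ > 0 such that k T₀ / (2^{α+1} d^{α/2+1} γ) = μ^{α+2} M(α/2 + 1, 3/2, μ²). -/

import Mathlib

open Real Filter Topology

/-- The Kummer confluent hypergeometric function `M(a,b,z)`, defined by its power series. -/
noncomputable def kummerM (a b z : ℝ) : ℝ :=
  ∑' s : ℕ, ((ascPochhammer ℝ s).eval a / ((ascPochhammer ℝ s).eval b * (Nat.factorial s : ℝ)))
      * z ^ s

/-!
For `a, b > 0` the Kummer series has positive coefficients dominated by `c ^ s / s!` with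
`c = max 1 (a / b)`, so it converges locally uniformly; hence `M(a, b, ·)` is continuous, at least
`1` and strictly increasing on `[0, ∞)`. Then `F μ = μ ^ p * M(a, b, μ²)` with `p > 0` is
continuous and strictly increasing on `[0, ∞)`, `F 0 = 0` and `F (C ^ (1 / p)) ≥ C`: the
intermediate value theorem gives the root and strict monotonicity its uniqueness.
-/

noncomputable def kummerCoeff (a b : ℝ) (s : ℕ) : ℝ :=
  (ascPochhammer ℝ s).eval a / ((ascPochhammer ℝ s).eval b * (Nat.factorial s : ℝ))

theorem kummerM_eq_tsum (a b z : ℝ) : kummerM a b z = ∑' s : ℕ, kummerCoeff a b s * z ^ s := rfl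

theorem kummerCoeff_zero (a b : ℝ) : kummerCoeff a b 0 = 1 := by
  simp [kummerCoeff]

theorem kummerCoeff_pos {a b : ℝ} (ha : 0 < a) (hb : 0 < b) (s : ℕ) : 0 < kummerCoeff a b s :=
  div_pos (ascPochhammer_pos s a ha) (mul_pos (ascPochhammer_pos s b hb) (by positivity))

theorem ascPochhammer_eval_le_pow_mul_eval {a b c : ℝ} (ha : 0 < a) (hc : 1 ≤ c)
    (hab : a ≤ c * b) (s : ℕ) :
    (ascPochhammer ℝ s).eval a ≤ c ^ s * (ascPochhammer ℝ s).eval b := by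
  induction s with
  | zero => simp
  | succ n ih =>
    rw [ascPochhammer_succ_eval, ascPochhammer_succ_eval]
    have hn : a + n ≤ c * (b + n) := by nlinarith
    calc (ascPochhammer ℝ n).eval a * (a + n)
        ≤ (c ^ n * (ascPochhammer ℝ n).eval b) * (c * (b + n)) :=
          mul_le_mul ih hn (by positivity) ((ascPochhammer_pos n a ha).le.trans ih)
      _ = c ^ (n + 1) * ((ascPochhammer ℝ n).eval b * (b + n)) := by ring

theorem kummerCoeff_le {a b : ℝ} (ha : 0 < a) (hb : 0 < b) (s : ℕ) :
    kummerCoeff a b s ≤ max 1 (a / b) ^ s / s.factorial := by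
  have hab : a ≤ max 1 (a / b) * b :=
    (div_le_iff₀ hb).mp (le_max_right _ _)
  rw [kummerCoeff, div_le_div_iff₀ (mul_pos (ascPochhammer_pos s b hb) (by positivity))
    (by positivity), mul_comm _ (s.factorial : ℝ), ← mul_assoc, mul_comm _ (s.factorial : ℝ)]
  exact mul_le_mul_of_nonneg_left
    (ascPochhammer_eval_le_pow_mul_eval ha (le_max_left _ _) hab s) (by positivity)

theorem norm_kummerCoeff_mul_pow_le {a b z R : ℝ} (ha : 0 < a) (hb : 0 < b) (hz : |z| ≤ R)
    (s : ℕ) : ‖kummerCoeff a b s * z ^ s‖ ≤ (max 1 (a / b) * R) ^ s / s.factorial := by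
  have hc : 0 ≤ max 1 (a / b) := zero_le_one.trans (le_max_left _ _)
  rw [norm_mul, norm_pow, Real.norm_eq_abs, Real.norm_eq_abs,
    abs_of_pos (kummerCoeff_pos ha hb s), mul_pow, mul_div_right_comm]
  exact mul_le_mul (kummerCoeff_le ha hb s) (pow_le_pow_left₀ (abs_nonneg z) hz s)
    (by positivity) (by positivity)

theorem summable_kummerCoeff_mul_pow {a b : ℝ} (ha : 0 < a) (hb : 0 < b) (z : ℝ) :
    Summable fun s : ℕ => kummerCoeff a b s * z ^ s :=
  Summable.of_norm_bounded (Real.summable_pow_div_factorial _)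
    (norm_kummerCoeff_mul_pow_le ha hb le_rfl)

theorem continuous_kummerM {a b : ℝ} (ha : 0 < a) (hb : 0 < b) : Continuous (kummerM a b) := by
  refine continuous_iff_continuousAt.mpr fun x => ?_
  have hcont : ContinuousOn (kummerM a b) (Set.Icc (-(|x| + 1)) (|x| + 1)) :=
    continuousOn_tsum (fun s => (continuous_const.mul (continuous_pow s)).continuousOn)
      (Real.summable_pow_div_factorial _)
      (fun s z hz => norm_kummerCoeff_mul_pow_le ha hb (abs_le.mpr hz) s)
  refine hcont.continuousAt (Icc_mem_nhds ?_ ?_) <;> linarith [neg_abs_le x, le_abs_self x]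

theorem one_le_kummerM {a b z : ℝ} (ha : 0 < a) (hb : 0 < b) (hz : 0 ≤ z) :
    1 ≤ kummerM a b z := by
  rw [kummerM_eq_tsum]
  calc (1 : ℝ) = ∑ s ∈ {0}, kummerCoeff a b s * z ^ s := by simp [kummerCoeff_zero]
    _ ≤ _ := (summable_kummerCoeff_mul_pow ha hb z).sum_le_tsum _
          fun s _ => mul_nonneg (kummerCoeff_pos ha hb s).le (pow_nonneg hz s)

theorem kummerM_strictMonoOn {a b : ℝ} (ha : 0 < a) (hb : 0 < b) :
    StrictMonoOn (kummerM a b) (Set.Ici 0) := by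
  intro x hx y _ hxy
  rw [kummerM_eq_tsum, kummerM_eq_tsum]
  refine Summable.tsum_lt_tsum_of_nonneg (i := 1)
    (fun s => mul_nonneg (kummerCoeff_pos ha hb s).le (pow_nonneg hx s))
    (fun s => mul_le_mul_of_nonneg_left (pow_le_pow_left₀ hx hxy.le s)
      (kummerCoeff_pos ha hb s).le) ?_ (summable_kummerCoeff_mul_pow ha hb y)
  simpa using mul_lt_mul_of_pos_left hxy (kummerCoeff_pos ha hb 1)

section RootEquation

variable {p a b : ℝ}

theorem strictMonoOn_rpow_mul_kummerM_sq (hp : 0 < p) (ha : 0 < a) (hb : 0 < b) :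
    StrictMonoOn (fun μ : ℝ => μ ^ p * kummerM a b (μ ^ 2)) (Set.Ici 0) := by
  intro x (hx : 0 ≤ x) y (hy : 0 ≤ y) hxy
  exact mul_lt_mul'' (Real.rpow_lt_rpow hx hxy hp)
    (kummerM_strictMonoOn ha hb (sq_nonneg x) (sq_nonneg y) (pow_lt_pow_left₀ hxy hx two_ne_zero))
    (Real.rpow_nonneg hx p) (zero_le_one.trans (one_le_kummerM ha hb (sq_nonneg x)))

theorem exists_unique_pos_eq_rpow_mul_kummerM_sq (hp : 0 < p) (ha : 0 < a) (hb : 0 < b)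
    {C : ℝ} (hC : 0 < C) : ∃! μ : ℝ, 0 < μ ∧ C = μ ^ p * kummerM a b (μ ^ 2) := by
  set F : ℝ → ℝ := fun μ => μ ^ p * kummerM a b (μ ^ 2)
  have hF : Continuous F :=
    (Real.continuous_rpow_const hp.le).mul ((continuous_kummerM ha hb).comp (continuous_pow 2))
  set μ₁ := C ^ p⁻¹
  have hF0 : F 0 = 0 := by simp [F, Real.zero_rpow hp.ne']
  have hFμ₁ : C ≤ F μ₁ :=
    calc C = μ₁ ^ p := (Real.rpow_inv_rpow hC.le hp.ne').symm
      _ ≤ F μ₁ := le_mul_of_one_le_right (Real.rpow_nonneg (by positivity) p)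
          (one_le_kummerM ha hb (sq_nonneg μ₁))
  obtain ⟨μ, ⟨hμ0, -⟩, hFμ⟩ := intermediate_value_Icc (by positivity) hF.continuousOn
    ⟨hF0 ▸ hC.le, hFμ₁⟩
  have hμ : 0 < μ := hμ0.lt_of_ne (by rintro rfl; exact hC.ne' (hF0 ▸ hFμ).symm)
  refine ⟨μ, ⟨hμ, hFμ.symm⟩, fun ν ⟨hν, hFν⟩ => ?_⟩
  exact (strictMonoOn_rpow_mul_kummerM_sq hp ha hb).injOn hν.le hμ.le (hFν.symm.trans hFμ.symm)

end RootEquation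

/-- unique free-boundary coefficient for the temperature problem (P2). -/
theorem exists_unique_mu_P2 (α d k γ T₀ : ℝ)
    (hα : 0 ≤ α) (hd : 0 < d) (hk : 0 < k) (hγ : 0 < γ) (hT : 0 < T₀) :
    ∃! μ : ℝ, 0 < μ ∧
      k * T₀ / (2 ^ (α + 1) * d ^ (α / 2 + 1) * γ)
        = μ ^ (α + 2) * kummerM (α / 2 + 1) (3 / 2) (μ ^ 2) := by
  have hd' : 0 < d ^ (α / 2 + 1) := Real.rpow_pos_of_pos hd _
  have h2 : (0 : ℝ) < 2 ^ (α + 1) := Real.rpow_pos_of_pos two_pos _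
  exact exists_unique_pos_eq_rpow_mul_kummerM_sq (by positivity) (by positivity) (by norm_num)
    (by positivity)
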